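/- arXiv:math/0002086 — 4 statements merged into one kernel-verified Lean document; each statement's English description precedes it below -/
import Mathlib

section
/- If G is a subgroup of GL(n, F), where F is a field of characteristic zero, and G has finite exponent e (i.e., g^e = 1 for every g in G), then G is finite. -/
open Polynomial Matrix IntermediateField

lemma real_pow_eq_one (x : ℝ) (e : ℕ) (he : 0 < e) (hx : 0 ≤ x) (h : x ^ e = 1) : x = 1 := by
  rcases lt_trichotomy x 1 with h1 | h1 | h1
  · have := pow_lt_one₀ hx h1 he.ne'
    rw [h] at this; exact absurd this (lt_irrefl 1)
  · exact h1
  · have := one_lt_pow₀ h1 he.ne'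
    rw [h] at this; exact absurd this (lt_irrefl 1)

lemma complex_roots_of_unity_sum (e : ℕ) (he : 0 < e) (m : Multiset ℂ)
    (h1 : ∀ z ∈ m, z ^ e = 1) (h2 : m.sum = m.card) : ∀ z ∈ m, z = 1 := by
  have habs : ∀ z ∈ m, ‖z‖ = 1 := by
    intro z hz
    refine real_pow_eq_one _ e he (norm_nonneg z) ?_
    rw [← norm_pow, h1 z hz, norm_one]
  have hre : ∀ z ∈ m, z.re ≤ 1 := by
    intro z hz
    calc z.re ≤ ‖z‖ := Complex.re_le_norm z
    _ = 1 := habs z hz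
  -- sum of real parts equals card
  have hsum : (m.map Complex.re).sum = (m.card : ℝ) := by
    have := congrArg Complex.re h2
    rw [show m.sum.re = (m.map Complex.re).sum from
      (map_multiset_sum Complex.reAddGroupHom m :)] at this
    simpa using this
  have hre1 : ∀ z ∈ m, z.re = 1 := by
    intro z hz
    by_contra hne
    have hlt : z.re < 1 := lt_of_le_of_ne (hre z hz) hne
    obtain ⟨m', rfl⟩ := Multiset.exists_cons_of_mem hz
    have hrest : (m'.map Complex.re).sum ≤ (Multiset.card m' : ℝ) := by
      calc (m'.map Complex.re).sum ≤ Multiset.card (m'.map Complex.re) • (1:ℝ) :=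
        Multiset.sum_le_card_nsmul _ _ (by
          intro x hx
          obtain ⟨w, hw, rfl⟩ := Multiset.mem_map.mp hx
          exact hre w (Multiset.mem_cons_of_mem hw))
      _ = (Multiset.card m' : ℝ) := by simp
    rw [Multiset.map_cons, Multiset.sum_cons, Multiset.card_cons] at hsum
    push_cast at hsum
    linarith
  intro z hz
  have h1' := habs z hz
  have h2' := hre1 z hz
  have : Complex.normSq z = 1 := by
    have := congrArg (· ^ 2) h1'
    simpa [Complex.sq_norm] using this
  have him : z.im = 0 := by
    have := Complex.normSq_apply z
    nlinarith [this, h2']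
  exact Complex.ext h2' him
lemma roots_of_unity_sum_eq_card {K : Type*} [Field K] [CharZero K]
    (e : ℕ) (he : 0 < e) (m : Multiset K)
    (h1 : ∀ z ∈ m, z ^ e = 1) (h2 : m.sum = m.card) : ∀ z ∈ m, z = 1 := by
  classical
  set S : Set K := {x | x ^ e = 1} with hS
  have hint : ∀ x ∈ S, IsIntegral ℚ x := by
    intro x hx
    refine ⟨X ^ e - 1, monic_X_pow_sub_C 1 he.ne', ?_⟩
    simp [hx.out]
  set L := IntermediateField.adjoin ℚ S with hL
  haveI : Algebra.IsAlgebraic ℚ L := IntermediateField.isAlgebraic_adjoin hint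
  let ψ : L →ₐ[ℚ] ℂ := IsAlgClosed.lift
  have hψinj : Function.Injective ψ := ψ.toRingHom.injective
  let lift : ∀ z ∈ m, L := fun z hz => ⟨z, IntermediateField.subset_adjoin ℚ S (h1 z hz)⟩
  let mL : Multiset L := m.attach.map (fun z => ⟨z.1, IntermediateField.subset_adjoin ℚ S (h1 z.1 z.2)⟩)
  have hmap : mL.map (algebraMap L K) = m := by
    simp only [mL, Multiset.map_map, Function.comp]
    exact Multiset.attach_map_val m
  have hcard : Multiset.card mL = Multiset.card m := by simp [mL]
  have hsumL : mL.sum = (Multiset.card m : L) := by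
    apply (algebraMap L K).injective
    rw [show ((algebraMap L K) mL.sum : K) = m.sum from by rw [map_multiset_sum, hmap], h2]
    push_cast
    ring
  let mC : Multiset ℂ := mL.map ψ
  have hall : ∀ w ∈ mC, w = 1 := by
    refine complex_roots_of_unity_sum e he mC ?_ ?_
    · intro w hw
      obtain ⟨z, hz, rfl⟩ := Multiset.mem_map.mp hw
      obtain ⟨x, hxm, rfl⟩ := Multiset.mem_map.mp hz
      rw [← map_pow, show ((⟨x.1, IntermediateField.subset_adjoin ℚ S (h1 x.1 x.2)⟩ : L) : ↥L) ^ e = 1 from ?_, _root_.map_one]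
      ext
      push_cast
      exact h1 x.1 x.2
    · rw [show mC.sum = ψ mL.sum from (map_multiset_sum ψ.toRingHom mL).symm, hsumL]
      simp [mC, hcard]
  intro z hz
  have hz' : (⟨z, IntermediateField.subset_adjoin ℚ S (h1 z hz)⟩ : L) ∈ mL := by
    apply Multiset.mem_map.mpr
    exact ⟨⟨z, hz⟩, Multiset.mem_attach _ _, rfl⟩
  have h3 : ψ ⟨z, IntermediateField.subset_adjoin ℚ S (h1 z hz)⟩ = ψ 1 := by
    rw [_root_.map_one]; exact hall _ (Multiset.mem_map_of_mem ψ hz')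
  have h4 := hψinj h3
  exact congrArg Subtype.val h4
lemma eval_charpoly' {k : ℕ} {K : Type*} [Field K] (N : Matrix (Fin k) (Fin k) K) (r : K) :
    (N.charpoly).eval r = (Matrix.scalar (Fin k) r - N).det := by
  rw [Matrix.charpoly, eval_det, matPolyEquiv_charmatrix]
  simp

lemma charpoly_root_pow_eq_one {k : ℕ} {K : Type*} [Field K]
    (N : Matrix (Fin k) (Fin k) K) (e : ℕ) (hN : N ^ e = 1)
    (r : K) (hr : N.charpoly.IsRoot r) : r ^ e = 1 := by
  have hdet : (Matrix.scalar (Fin k) r - N).det = 0 := by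
    rw [← eval_charpoly']; exact hr
  obtain ⟨v, hv0, hv⟩ := Matrix.exists_mulVec_eq_zero_iff.mpr hdet
  have hvN : N.mulVec v = r • v := by
    have := sub_mulVec (Matrix.scalar (Fin k) r) N v
    rw [hv] at this
    have h2 : (Matrix.scalar (Fin k) r).mulVec v = r • v := by
      rw [show (Matrix.scalar (Fin k) r) = r • (1 : Matrix (Fin k) (Fin k) K) from by
        ext i j
        by_cases h : i = j <;> simp [Matrix.scalar, Matrix.one_apply, h]]
      rw [smul_mulVec, Matrix.one_mulVec]
    rw [h2] at this
    have := this.symm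
    rw [sub_eq_zero] at this
    exact this.symm
  have hpow : ∀ j : ℕ, (N ^ j).mulVec v = r ^ j • v := by
    intro j
    induction j with
    | zero => simp [Matrix.one_mulVec]
    | succ j ih =>
      rw [pow_succ', pow_succ']
      rw [← Matrix.mulVec_mulVec, ih, Matrix.mulVec_smul, hvN, smul_smul, mul_comm]
  have := hpow e
  rw [hN, Matrix.one_mulVec] at this
  have : (r ^ e - 1) • v = 0 := by
    rw [sub_smul, one_smul, ← this, sub_self]
  rcases smul_eq_zero.mp this with h | h
  · exact sub_eq_zero.mp h
  · exact absurd h hv0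
lemma trace_eq_card_imp_one {n : ℕ} {F : Type*} [Field F] [CharZero F]
    (M : Matrix (Fin n) (Fin n) F) (e : ℕ) (he : 0 < e)
    (hM : M ^ e = 1) (htr : M.trace = (n : F)) : M = 1 := by
  classical
  rcases Nat.eq_zero_or_pos n with rfl | hn
  · ext i j; exact Fin.elim0 i
  haveI : Nonempty (Fin n) := Fin.pos_iff_nonempty.mp hn
  set K := AlgebraicClosure F
  haveI : CharZero K := charZero_of_injective_algebraMap (algebraMap F K).injective
  set f := algebraMap F K with hf
  set N : Matrix (Fin n) (Fin n) K := M.map f with hNdef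
  have hNe : N ^ e = 1 := by
    have : N = f.mapMatrix M := rfl
    rw [this, ← RingHom.map_pow, hM, RingHom.map_one]
  have htrN : N.trace = (n : K) := by
    have : N.trace = f M.trace := by
      simp only [Matrix.trace, Matrix.diag, map_sum]
      exact Finset.sum_congr rfl (fun x _ => rfl)
    rw [this, htr, map_natCast]
  have hroots_pow : ∀ z ∈ N.charpoly.roots, z ^ e = 1 := by
    intro z hz
    exact charpoly_root_pow_eq_one N e hNe z (isRoot_of_mem_roots hz)
  have hcharpoly_ne : N.charpoly ≠ 0 := N.charpoly_monic.ne_zero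
  have hcard : Multiset.card N.charpoly.roots = n := by
    rw [(splits_iff_card_roots.mp (IsAlgClosed.splits N.charpoly)),
      Matrix.charpoly_natDegree_eq_dim, Fintype.card_fin]
  have hsum : N.charpoly.roots.sum = (Multiset.card N.charpoly.roots : K) := by
    rw [← Matrix.trace_eq_sum_roots_charpoly, htrN, hcard]
  have hall1 : ∀ z ∈ N.charpoly.roots, z = 1 :=
    roots_of_unity_sum_eq_card e he _ hroots_pow hsum
  -- minpoly
  have hInt : IsIntegral K N := .of_finite K N
  set p := minpoly K N with hp
  have hmono : p.Monic := minpoly.monic hInt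
  have hdvd1 : p ∣ X ^ e - 1 := by
    apply minpoly.dvd
    rw [map_sub, map_pow, aeval_X, _root_.map_one, hNe, sub_self]
  have hsepXe : (X ^ e - 1 : K[X]).Separable := by
    have := separable_X_pow_sub_C (1 : K) (by exact_mod_cast Nat.cast_ne_zero.mpr he.ne') one_ne_zero
    rwa [Polynomial.C_1] at this
  have hpsep : p.Separable := hsepXe.of_dvd hdvd1
  have hdvd2 : p ∣ N.charpoly := N.minpoly_dvd_charpoly
  have hprootsub : p.roots ≤ N.charpoly.roots := roots.le_of_dvd hcharpoly_ne hdvd2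
  have hproots1 : ∀ z ∈ p.roots, z = 1 := fun z hz => hall1 z (Multiset.mem_of_le hprootsub hz)
  have hpsplit : p.Splits := IsAlgClosed.splits p
  have hpfact : p = (p.roots.map fun a => X - C a).prod :=
    hpsplit.eq_prod_roots_of_monic hmono
  set c := Multiset.card p.roots with hc
  have hrepl : p.roots = Multiset.replicate c 1 :=
    Multiset.eq_replicate.mpr ⟨rfl, hproots1⟩
  have hpow : p = (X - C 1) ^ c := by
    conv_lhs => rw [hpfact, hrepl]
    rw [Multiset.map_replicate, Multiset.prod_replicate]
  have hdegpos : 0 < p.natDegree := minpoly.natDegree_pos hInt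
  have hcardroots : c = p.natDegree :=
    splits_iff_card_roots.mp hpsplit
  have hle1 : c ≤ 1 := by
    by_contra hgt
    push_neg at hgt
    have h2 : (X - C 1 : K[X]) * (X - C 1) ∣ p := by
      rw [hpow]
      exact dvd_trans (by rw [← pow_two]; exact pow_dvd_pow _ hgt) dvd_rfl
    have := hpsep.squarefree _ h2
    exact (Polynomial.not_isUnit_X_sub_C 1) this
  have hcard1 : c = 1 := le_antisymm hle1 (hcardroots ▸ hdegpos)
  have hpeq : p = X - C 1 := by rw [hpow, hcard1, pow_one]
  have : aeval N p = 0 := minpoly.aeval K N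
  rw [hpeq, map_sub, aeval_X, aeval_C, _root_.map_one] at this
  have hN1 : N = 1 := by rwa [sub_eq_zero] at this
  -- descend to F
  ext i j
  apply (algebraMap F K).injective
  have : N i j = (1 : Matrix (Fin n) (Fin n) K) i j := by rw [hN1]
  rw [hNdef] at this
  simp only [Matrix.map_apply] at this
  rw [this]
  by_cases h : i = j <;> simp [Matrix.one_apply, h]
lemma trace_set_finite (n : ℕ) {F : Type*} [Field F] (e : ℕ) (he : 0 < e) :
    Set.Finite {x : F | ∃ M : Matrix (Fin n) (Fin n) F, M ^ e = 1 ∧ M.trace = x} := by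
  classical
  set K := AlgebraicClosure F
  set f := algebraMap F K with hf
  set R : Set K := {x : K | x ^ e = 1} with hR
  have hRfin : R.Finite := by
    apply Set.Finite.subset (Polynomial.finite_setOf_isRoot
      (p := (X ^ e - 1 : K[X])) (monic_X_pow_sub_C (1 : K) he.ne').ne_zero)
    intro x hx
    simp only [Set.mem_setOf_eq, IsRoot, eval_sub, eval_pow, eval_X, eval_one]
    rw [hx.out, sub_self]
  haveI : Finite R := hRfin.to_subtype
  set Sums : Set K := Set.range (fun g : Fin n → R => ∑ i, (g i : K)) with hSums
  have hSumsFin : Sums.Finite := Set.finite_range _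
  apply Set.Finite.of_finite_image (f := f)
  · apply Set.Finite.subset hSumsFin
    rintro y ⟨x, ⟨M, hMe, rfl⟩, rfl⟩
    set N : Matrix (Fin n) (Fin n) K := M.map f with hNdef
    have hNe : N ^ e = 1 := by
      have : N = f.mapMatrix M := rfl
      rw [this, ← RingHom.map_pow, hMe, RingHom.map_one]
    have htrN : N.trace = f M.trace := by
      simp only [Matrix.trace, Matrix.diag, map_sum]
      exact Finset.sum_congr rfl (fun x _ => rfl)
    have hsum : N.trace = N.charpoly.roots.sum := Matrix.trace_eq_sum_roots_charpoly N
    have hcard : Multiset.card N.charpoly.roots = n := by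
      rw [(splits_iff_card_roots.mp (IsAlgClosed.splits N.charpoly)),
        Matrix.charpoly_natDegree_eq_dim, Fintype.card_fin]
    set l := N.charpoly.roots.toList with hl
    have hlen : l.length = n := by rw [hl, Multiset.length_toList, hcard]
    have hmem : ∀ i : Fin l.length, l.get i ∈ R := by
      intro i
      have : l.get i ∈ N.charpoly.roots := by
        rw [← Multiset.mem_toList]; exact l.get_mem i
      exact charpoly_root_pow_eq_one N e hNe _ (isRoot_of_mem_roots this)
    refine ⟨fun i => ⟨l.get (Fin.cast hlen.symm i), hmem _⟩, ?_⟩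
    show ∑ i : Fin n, l.get (Fin.cast hlen.symm i) = f M.trace
    rw [← htrN, hsum, show N.charpoly.roots.sum = l.sum from (Multiset.sum_toList _).symm]
    rw [← Fin.sum_univ_getElem l]
    exact Fintype.sum_equiv (Fin.castOrderIso hlen.symm).toEquiv _ _ (fun i => rfl)
  · exact Set.injOn_of_injective (f.injective)

/-- Burnside: a subgroup of `GL(n, F)` (`F` of characteristic zero) of finite
exponent `e` is finite. -/
theorem burnside_finite_exponent_linear_group
    {n : ℕ} {F : Type*} [Field F] [CharZero F]
    (G : Subgroup (GL (Fin n) F)) (e : ℕ) (he : 0 < e)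
    (hexp : ∀ g ∈ G, g ^ e = 1) :
    Finite G := by
  classical
  set V := Matrix (Fin n) (Fin n) F
  set X : Set V := (fun g : GL (Fin n) F => (g : V)) '' (G : Set (GL (Fin n) F)) with hX
  obtain ⟨s, hsX, hspan, hli⟩ := exists_linearIndependent F X
  have hsfin : s.Finite := hli.set_finite_of_isNoetherian
  set T : Set F := {x : F | ∃ M : V, M ^ e = 1 ∧ M.trace = x} with hT
  have hTfin : T.Finite := trace_set_finite n e he
  haveI : Finite s := hsfin.to_subtype
  haveI : Finite T := hTfin.to_subtype
  have hpow : ∀ g : GL (Fin n) F, g ∈ G → ((g : V)) ^ e = 1 := by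
    intro g hg
    calc (g : V) ^ e = ((g ^ e : GL (Fin n) F) : V) := by
          rw [Units.val_pow_eq_pow_val]
    _ = 1 := by rw [hexp g hg]; rfl
  -- the injection
  set Φ : G → (s → T) := fun g x =>
    ⟨(((g : GL (Fin n) F) : V) * x.1).trace, by
      obtain ⟨h, hh, hhx⟩ := hsX x.2
      have hgh : (g : GL (Fin n) F) * h ∈ G := mul_mem g.2 hh
      refine ⟨((g : GL (Fin n) F) : V) * x.1, ?_, rfl⟩
      have : ((g : GL (Fin n) F) : V) * x.1 = (((g : GL (Fin n) F) * h : GL (Fin n) F) : V) := by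
        rw [← hhx]; rfl
      rw [this]
      exact hpow _ hgh⟩ with hΦ
  have hinj : Function.Injective Φ := by
    intro g h hgh
    -- trace (g * x) = trace (h * x) for all x ∈ s
    have heq : ∀ x ∈ s, (((g : GL (Fin n) F) : V) * x).trace
        = (((h : GL (Fin n) F) : V) * x).trace := by
      intro x hx
      have := congrFun hgh ⟨x, hx⟩
      exact congrArg Subtype.val this
    -- extend to the span
    set Lg : V →ₗ[F] F :=
      (Matrix.traceLinearMap (Fin n) F F).comp (LinearMap.mulLeft F ((g : GL (Fin n) F) : V))
    set Lh : V →ₗ[F] F :=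
      (Matrix.traceLinearMap (Fin n) F F).comp (LinearMap.mulLeft F ((h : GL (Fin n) F) : V))
    have hspan_eq : ∀ x ∈ Submodule.span F s, Lg x = Lh x := by
      intro x hx
      induction hx using Submodule.span_induction with
      | mem y hy => exact heq y hy
      | zero => simp
      | add y z _ _ hy hz => simp [map_add, hy, hz]
      | smul a y _ hy => simp only [_root_.map_smul, hy]
    -- apply at (g⁻¹ : GL)
    have hginv_mem : (((g : G)⁻¹ : G) : GL (Fin n) F) ∈ G := ((g : G)⁻¹ : G).2
    have hmemspan : ((((g : G)⁻¹ : G) : GL (Fin n) F) : V) ∈ Submodule.span F s := by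
      rw [hspan]
      apply Submodule.subset_span
      exact ⟨_, hginv_mem, rfl⟩
    have hkey := hspan_eq _ hmemspan
    -- compute
    have hgg : Lg ((((g : G)⁻¹ : G) : GL (Fin n) F) : V) = (n : F) := by
      show ((((g : G) : GL (Fin n) F) : V) * ((((g : G)⁻¹ : G) : GL (Fin n) F) : V)).trace = (n : F)
      rw [show (((g : G) : GL (Fin n) F) : V) * ((((g : G)⁻¹ : G) : GL (Fin n) F) : V)
          = (((g : G) * (g : G)⁻¹ : G) : GL (Fin n) F) from rfl]
      rw [mul_inv_cancel]
      show (1 : V).trace = (n : F)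
      simp [Matrix.trace_one]
    have hhg : Lh ((((g : G)⁻¹ : G) : GL (Fin n) F) : V)
        = ((((h : G) * (g : G)⁻¹ : G) : GL (Fin n) F) : V).trace := by
      show ((((h : G) : GL (Fin n) F) : V) * ((((g : G)⁻¹ : G) : GL (Fin n) F) : V)).trace = _
      rw [show (((h : G) : GL (Fin n) F) : V) * ((((g : G)⁻¹ : G) : GL (Fin n) F) : V)
          = ((((h : G) * (g : G)⁻¹ : G) : GL (Fin n) F) : V) from rfl]
    set u : G := (h : G) * (g : G)⁻¹ with hu
    have hutr : (((u : G) : GL (Fin n) F) : V).trace = (n : F) := by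
      rw [← hhg, ← hkey, hgg]
    have hue : (((u : G) : GL (Fin n) F) : V) ^ e = 1 := hpow _ u.2
    have hu1 : (((u : G) : GL (Fin n) F) : V) = 1 := trace_eq_card_imp_one _ e he hue hutr
    have : ((u : G) : GL (Fin n) F) = 1 := Units.ext hu1
    have : (u : G) = (1 : G) := by
      apply Subtype.ext
      exact this
    have : (h : G) = (g : G) := by
      rw [hu] at this
      exact (mul_inv_eq_one.mp this)
    exact this.symm
  exact Finite.of_injective Φ hinj
end

section
/- If G is a subgroup of Diff(ℂ^n, 0) of finite exponent, then the kernel of the derivative homomorphism G → GL(n, ℂ) (i.e., the subgroup of elements of G tangent to the identity) is trivial. -/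
/-- For a subgroup of `Diff(ℂⁿ, 0)` of finite exponent `e`, the kernel of the
derivative homomorphism to `GL(n, ℂ)` is trivial: any element of the group
tangent to the identity is the identity germ. The subgroup is modelled by a set
`S` of representative functions, analytic at `0` and fixing `0`, closed under
composition and inversion up to germ equivalence at `0`. -/
theorem kernel_of_derivative_hom_is_trivial
    {n : ℕ} (S : Set ((Fin n → ℂ) → (Fin n → ℂ)))
    (hanal : ∀ f ∈ S, AnalyticAt ℂ f 0) (hfix : ∀ f ∈ S, f 0 = 0)
    (hid : ∃ f ∈ S, f =ᶠ[nhds 0] id)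
    (hcomp : ∀ f ∈ S, ∀ g ∈ S, ∃ h ∈ S, h =ᶠ[nhds 0] f ∘ g)
    (hinv : ∀ f ∈ S, ∃ g ∈ S, g ∘ f =ᶠ[nhds 0] id)
    (e : ℕ) (he : 0 < e)
    (hexp : ∀ f ∈ S, f^[e] =ᶠ[nhds 0] id) :
    ∀ f ∈ S, fderiv ℂ f 0 = ContinuousLinearMap.id ℂ (Fin n → ℂ) →
      f =ᶠ[nhds 0] id := by
  intro f hfS hdf
  have hfa : AnalyticAt ℂ f 0 := hanal f hfS
  have hf0 : f 0 = 0 := hfix f hfS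
  have hfe : f^[e] =ᶠ[nhds 0] id := hexp f hfS
  -- iterates of f are analytic at 0 and fix 0
  have hiter : ∀ j : ℕ, AnalyticAt ℂ f^[j] 0 ∧ f^[j] 0 = 0 := by
    intro j
    induction j with
    | zero => simpa using (analyticAt_id : AnalyticAt ℂ (id : (Fin n → ℂ) → _) 0)
    | succ j ih =>
      rw [Function.iterate_succ']
      refine ⟨AnalyticAt.comp ?_ ih.1, by simp [Function.comp, ih.2, hf0]⟩
      rw [ih.2]; exact hfa
  -- iterates of f have derivative id at 0
  have hfd : HasFDerivAt f (ContinuousLinearMap.id ℂ (Fin n → ℂ)) 0 := by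
    have := hfa.differentiableAt.hasFDerivAt
    rwa [hdf] at this
  have hder : ∀ j : ℕ, HasFDerivAt f^[j] (ContinuousLinearMap.id ℂ (Fin n → ℂ)) 0 := by
    intro j
    induction j with
    | zero => simpa using (hasFDerivAt_id (𝕜 := ℂ) (0 : Fin n → ℂ))
    | succ j ih =>
      rw [Function.iterate_succ']
      have h1 : HasFDerivAt f (ContinuousLinearMap.id ℂ (Fin n → ℂ)) (f^[j] 0) := by
        rw [(hiter j).2]; exact hfd
      simpa using h1.comp 0 ih
  -- Cartan's averaging trick
  set h : (Fin n → ℂ) → (Fin n → ℂ) :=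
    fun x => (e : ℂ)⁻¹ • ∑ j ∈ Finset.range e, f^[j] x with hh
  have hene : (e : ℂ) ≠ 0 := Nat.cast_ne_zero.mpr he.ne'
  have hha : AnalyticAt ℂ h 0 := by
    exact (analyticAt_const (v := (e : ℂ)⁻¹)).smul
      (Finset.analyticAt_fun_sum _ fun j _ => (hiter j).1)
  have hhd : HasFDerivAt h (ContinuousLinearMap.id ℂ (Fin n → ℂ)) 0 := by
    have h1 : HasFDerivAt (fun x => ∑ j ∈ Finset.range e, f^[j] x)
        (∑ j ∈ Finset.range e, ContinuousLinearMap.id ℂ (Fin n → ℂ)) 0 :=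
      HasFDerivAt.fun_sum fun j _ => hder j
    have h2 := h1.const_smul ((e : ℂ)⁻¹)
    convert h2 using 1
    case' e'_12 => ext x i
    simp only [ContinuousLinearMap.id_apply, Finset.sum_const, Finset.card_range,
      ContinuousLinearMap.coe_smul', Pi.smul_apply, ContinuousLinearMap.coe_sum']
    simp [smul_smul, ← mul_assoc, inv_mul_cancel₀ hene]
    all_goals rfl
  have hstrict : HasStrictFDerivAt h (ContinuousLinearMap.id ℂ (Fin n → ℂ)) 0 :=
    (hha.contDiffAt (n := 1)).hasStrictFDerivAt' hhd one_ne_zero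
  have hstrict' : HasStrictFDerivAt h
      ((ContinuousLinearEquiv.refl ℂ (Fin n → ℂ) :
        (Fin n → ℂ) ≃L[ℂ] (Fin n → ℂ)) : (Fin n → ℂ) →L[ℂ] (Fin n → ℂ)) 0 := by
    simpa using hstrict
  -- functional equation h ∘ f = h near 0
  have hhf : ∀ᶠ x in nhds (0 : Fin n → ℂ), h (f x) = h x := by
    filter_upwards [hfe] with x hx
    have hsum : ∑ j ∈ Finset.range e, f^[j] (f x) = ∑ j ∈ Finset.range e, f^[j] x := by
      have hx' : f^[e] x = x := hx
      have A := Finset.sum_range_succ (fun j => f^[j] x) e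
      have B := Finset.sum_range_succ' (fun j => f^[j] x) e
      have key : (∑ j ∈ Finset.range e, f^[j+1] x)
          = ∑ j ∈ Finset.range e, f^[j] x := by
        have hBA := B.symm.trans A
        rw [Function.iterate_zero_apply, hx'] at hBA
        exact add_right_cancel hBA
      calc ∑ j ∈ Finset.range e, f^[j] (f x)
          = ∑ j ∈ Finset.range e, f^[j+1] x := by
            refine Finset.sum_congr rfl fun j _ => ?_
            rw [Function.iterate_succ_apply]
        _ = ∑ j ∈ Finset.range e, f^[j] x := key
    simp only [hh, hsum]
  -- conclude using the local inverse of h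
  have hle := hstrict'.eventually_left_inverse
  have htend : Filter.Tendsto f (nhds 0) (nhds (0 : Fin n → ℂ)) := by
    have := hfa.continuousAt.tendsto
    rwa [hf0] at this
  have h2 : ∀ᶠ x in nhds (0 : Fin n → ℂ),
      hstrict'.localInverse h _ _ (h (f x)) = f x := htend.eventually hle
  filter_upwards [hhf, h2, hle] with x h1 h2 h3
  calc f x = hstrict'.localInverse h _ _ (h (f x)) := h2.symm
    _ = hstrict'.localInverse h _ _ (h x) := by rw [h1]
    _ = x := h3
end

section
/- Every finite subgroup of the group of germs of biholomorphisms of (ℂ^n, 0) fixing 0 is conjugate (by a germ of biholomorphism) to a subgroup of GL(n, ℂ). -/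
open Filter Topology

section BochnerAux

variable {E : Type*}

/-- The chosen representative of a germ is eventually equal to any function
generating it. -/
lemma germ_rep_spec (l : Filter E) (f : E → E) :
    (Quotient.out ((f : Filter.Germ l E))) =ᶠ[l] f :=
  Quotient.mk_out (s := Filter.germSetoid l E) f

lemma germ_eq_of_rep {l : Filter E} {γ₁ γ₂ : Filter.Germ l E}
    (h : (Quotient.out γ₁) =ᶠ[l] (Quotient.out γ₂)) : γ₁ = γ₂ := by
  rw [← Quotient.out_eq γ₁, ← Quotient.out_eq γ₂]
  exact Quotient.sound h

end BochnerAux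

/-- Bochner linearization: a finite subgroup of the group `Diff(ℂⁿ, 0)` of
germs at `0` of biholomorphisms fixing `0` is conjugate, by a germ of
biholomorphism `h`, to a subgroup of `GL(n, ℂ)`: `h ∘ f ∘ h⁻¹` is (the germ of)
a linear map for every `f` in the group. The group is modelled by a finite set
`S` of representative functions, analytic at `0`, fixing `0`, with invertible
derivative, closed under composition and inversion up to germ equivalence. -/
theorem finite_subgroup_of_germ_diffeos_is_linearizable
    {n : ℕ} (S : Set ((Fin n → ℂ) → (Fin n → ℂ))) (hS : S.Finite)
    (hanal : ∀ f ∈ S, AnalyticAt ℂ f 0) (hfix : ∀ f ∈ S, f 0 = 0)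
    (hder : ∀ f ∈ S, IsUnit (fderiv ℂ f 0))
    (hid : ∃ f ∈ S, f =ᶠ[nhds 0] id)
    (hcomp : ∀ f ∈ S, ∀ g ∈ S, ∃ h ∈ S, h =ᶠ[nhds 0] f ∘ g)
    (hinv : ∀ f ∈ S, ∃ g ∈ S, g ∘ f =ᶠ[nhds 0] id) :
    ∃ h : (Fin n → ℂ) → (Fin n → ℂ), AnalyticAt ℂ h 0 ∧ h 0 = 0 ∧
      IsUnit (fderiv ℂ h 0) ∧
      ∀ f ∈ S, ∃ A : (Fin n → ℂ) ≃L[ℂ] (Fin n → ℂ),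
        h ∘ f =ᶠ[nhds 0] fun x => A (h x) := by
  classical
  -- every element of S tends to 0 at 0
  have htend : ∀ f ∈ S, Filter.Tendsto f (𝓝 (0 : (Fin n → ℂ))) (𝓝 (0 : (Fin n → ℂ))) := by
    intro f hf
    have h1 : ContinuousAt f 0 := (hanal f hf).continuousAt
    have := h1.tendsto
    rwa [hfix f hf] at this
  -- two-sided inverses
  have hrinv : ∀ f ∈ S, ∃ g ∈ S,
      Filter.Tendsto g (𝓝 (0 : (Fin n → ℂ))) (𝓝 (0 : (Fin n → ℂ))) ∧ (f ∘ g) =ᶠ[𝓝 (0 : (Fin n → ℂ))] id := by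
    intro f hf
    obtain ⟨g, hg, hgf⟩ := hinv f hf
    obtain ⟨g', hg', hg'g⟩ := hinv g hg
    refine ⟨g, hg, htend g hg, ?_⟩
    have h1 : f =ᶠ[𝓝 (0 : (Fin n → ℂ))] g' := by
      calc f = id ∘ f := rfl
        _ =ᶠ[𝓝 (0 : (Fin n → ℂ))] (g' ∘ g) ∘ f := (hg'g.comp_tendsto (htend f hf)).symm
        _ = g' ∘ (g ∘ f) := rfl
        _ =ᶠ[𝓝 (0 : (Fin n → ℂ))] g' ∘ id := hgf.fun_comp g'
        _ = g' := rfl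
    calc f ∘ g =ᶠ[𝓝 (0 : (Fin n → ℂ))] g' ∘ g := h1.comp_tendsto (htend g hg)
      _ =ᶠ[𝓝 (0 : (Fin n → ℂ))] id := hg'g
  -- the set of germs of elements of S
  set G : Set (Filter.Germ (𝓝 (0 : (Fin n → ℂ))) (Fin n → ℂ)) := (Filter.Germ.ofFun (l := 𝓝 (0 : (Fin n → ℂ)))) '' S
    with hGdef
  have hGfin : G.Finite := hS.image _
  set Gf : Finset (Filter.Germ (𝓝 (0 : (Fin n → ℂ))) (Fin n → ℂ)) := hGfin.toFinset with hGf
  -- each germ in Gf has representative eventually equal to some element of S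
  have hmem : ∀ γ ∈ Gf, ∃ f ∈ S, (Quotient.out γ) =ᶠ[𝓝 (0 : (Fin n → ℂ))] f := by
    intro γ hγ
    rw [hGf, Set.Finite.mem_toFinset] at hγ
    obtain ⟨f, hf, rfl⟩ := hγ
    exact ⟨f, hf, germ_rep_spec _ f⟩
  have hγanal : ∀ γ ∈ Gf, AnalyticAt ℂ (Quotient.out γ) 0 := by
    intro γ hγ
    obtain ⟨f, hf, hff⟩ := hmem γ hγ
    exact (hanal f hf).congr hff.symm
  have hγ0 : ∀ γ ∈ Gf, (Quotient.out γ) 0 = 0 := by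
    intro γ hγ
    obtain ⟨f, hf, hff⟩ := hmem γ hγ
    rw [hff.eq_of_nhds, hfix f hf]
  have hγder : ∀ γ ∈ Gf, IsUnit (fderiv ℂ (Quotient.out γ) 0) := by
    intro γ hγ
    obtain ⟨f, hf, hff⟩ := hmem γ hγ
    rw [hff.fderiv_eq]
    exact hder f hf
  -- the unit given by the derivative of the representative
  set u : Filter.Germ (𝓝 (0 : (Fin n → ℂ))) (Fin n → ℂ) → ((Fin n → ℂ) →L[ℂ] (Fin n → ℂ))ˣ := fun γ =>
    if h : IsUnit (fderiv ℂ (Quotient.out γ) 0) then h.unit else 1 with hudef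
  have hu_val : ∀ γ ∈ Gf, ((u γ : (Fin n → ℂ) →L[ℂ] (Fin n → ℂ))) = fderiv ℂ (Quotient.out γ) 0 := by
    intro γ hγ
    rw [hudef]
    simp only [hγder γ hγ, dif_pos]
    exact (hγder γ hγ).unit_spec
  set N : ℕ := Gf.card with hN
  have hNpos : 0 < N := by
    obtain ⟨f0, hf0, _⟩ := hid
    have : (Filter.Germ.ofFun (l := 𝓝 (0 : (Fin n → ℂ))) f0) ∈ Gf := by
      rw [hGf, Set.Finite.mem_toFinset]; exact ⟨f0, hf0, rfl⟩
    exact Finset.card_pos.2 ⟨_, this⟩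
  have hNne : ((N : ℂ)) ≠ 0 := by exact_mod_cast Nat.cast_ne_zero.2 hNpos.ne'
  set c : ℂ := (N : ℂ)⁻¹ with hc
  -- the averaged map
  set h0 : (Fin n → ℂ) → (Fin n → ℂ) := fun x => c • ∑ γ ∈ Gf, ((u γ)⁻¹).val (Quotient.out γ x)
    with hh0
  -- analyticity
  have h0anal : AnalyticAt ℂ h0 0 := by
    have hsum : AnalyticAt ℂ
        (fun x => ∑ γ ∈ Gf, ((u γ)⁻¹).val (Quotient.out γ x)) 0 :=
      Gf.analyticAt_fun_sum (fun γ hγ =>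
        (((u γ)⁻¹).val.analyticAt _).comp (hγanal γ hγ))
    exact (analyticAt_const (v := c)).smul hsum
  -- value at 0
  have h00 : h0 0 = 0 := by
    rw [hh0]
    simp only
    rw [Finset.sum_congr rfl (fun γ hγ => by rw [hγ0 γ hγ, map_zero])]
    simp
  -- derivative at 0 is the identity
  have h0der : HasFDerivAt h0 (1 : (Fin n → ℂ) →L[ℂ] (Fin n → ℂ)) 0 := by
    have hterm : ∀ γ ∈ Gf, HasFDerivAt
        (fun x => ((u γ)⁻¹).val (Quotient.out γ x)) (1 : (Fin n → ℂ) →L[ℂ] (Fin n → ℂ)) 0 := by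
      intro γ hγ
      have h1 : HasFDerivAt (Quotient.out γ) (fderiv ℂ (Quotient.out γ) 0) 0 :=
        (hγanal γ hγ).differentiableAt.hasFDerivAt
      have h2 := (((u γ)⁻¹).val.hasFDerivAt (x := Quotient.out γ 0)).comp 0 h1
      have h3 : (((u γ)⁻¹).val).comp (fderiv ℂ (Quotient.out γ) 0)
          = (1 : (Fin n → ℂ) →L[ℂ] (Fin n → ℂ)) := by
        rw [← hu_val γ hγ, ← ContinuousLinearMap.mul_def, ← Units.val_mul, inv_mul_cancel,
          Units.val_one]
      rwa [h3] at h2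
    have hsum : HasFDerivAt
        (fun x => ∑ γ ∈ Gf, ((u γ)⁻¹).val (Quotient.out γ x))
        (∑ _γ ∈ Gf, (1 : (Fin n → ℂ) →L[ℂ] (Fin n → ℂ))) 0 := HasFDerivAt.fun_sum hterm
    have := hsum.const_smul c
    have heq : c • (∑ _γ ∈ Gf, (1 : (Fin n → ℂ) →L[ℂ] (Fin n → ℂ))) = (1 : (Fin n → ℂ) →L[ℂ] (Fin n → ℂ)) := by
      rw [Finset.sum_const, ← hN, ← Nat.cast_smul_eq_nsmul ℂ, smul_smul, hc,
        inv_mul_cancel₀ hNne, one_smul]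
    rwa [heq] at this
  refine ⟨h0, h0anal, h00, ?_, ?_⟩
  · rw [h0der.fderiv]; exact isUnit_one
  -- the main linearization statement
  intro f hf
  set uf : ((Fin n → ℂ) →L[ℂ] (Fin n → ℂ))ˣ := (hder f hf).unit with huf
  have hufval : (uf : (Fin n → ℂ) →L[ℂ] (Fin n → ℂ)) = fderiv ℂ f 0 := (hder f hf).unit_spec
  refine ⟨ContinuousLinearEquiv.unitsEquiv ℂ (Fin n → ℂ) uf, ?_⟩
  -- the composition-with-f map on germs
  set Φ : Filter.Germ (𝓝 (0 : (Fin n → ℂ))) (Fin n → ℂ) → Filter.Germ (𝓝 (0 : (Fin n → ℂ))) (Fin n → ℂ) := fun γ =>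
    Filter.Germ.ofFun (l := 𝓝 (0 : (Fin n → ℂ))) (Quotient.out γ ∘ f) with hΦ
  have hΦrep : ∀ γ : Filter.Germ (𝓝 (0 : (Fin n → ℂ))) (Fin n → ℂ),
      Quotient.out (Φ γ) =ᶠ[𝓝 (0 : (Fin n → ℂ))] Quotient.out γ ∘ f := fun γ =>
    germ_rep_spec _ _
  -- Φ maps Gf into Gf
  have hΦmem : ∀ γ ∈ Gf, Φ γ ∈ Gf := by
    intro γ hγ
    obtain ⟨g, hg, hgg⟩ := hmem γ hγ
    obtain ⟨k, hk, hkk⟩ := hcomp g hg f hf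
    rw [hGf, Set.Finite.mem_toFinset]
    refine ⟨k, hk, ?_⟩
    have : (Quotient.out γ ∘ f : (Fin n → ℂ) → (Fin n → ℂ)) =ᶠ[𝓝 (0 : (Fin n → ℂ))] k := by
      calc (Quotient.out γ ∘ f : (Fin n → ℂ) → (Fin n → ℂ)) =ᶠ[𝓝 (0 : (Fin n → ℂ))] g ∘ f :=
            hgg.comp_tendsto (htend f hf)
        _ =ᶠ[𝓝 (0 : (Fin n → ℂ))] k := hkk.symm
    exact (Filter.Germ.coe_eq.2 this.symm)
  -- Φ is injective on Gf
  have hΦinj : Set.InjOn Φ Gf := by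
    intro γ₁ h₁ γ₂ h₂ heq
    obtain ⟨g, hg, hgt, hfg⟩ := hrinv f hf
    have h3 : (Quotient.out γ₁ ∘ f : (Fin n → ℂ) → (Fin n → ℂ)) =ᶠ[𝓝 (0 : (Fin n → ℂ))] Quotient.out γ₂ ∘ f :=
      Filter.Germ.coe_eq.1 heq
    have h4 : ((Quotient.out γ₁ ∘ f) ∘ g : (Fin n → ℂ) → (Fin n → ℂ)) =ᶠ[𝓝 (0 : (Fin n → ℂ))]
        (Quotient.out γ₂ ∘ f) ∘ g := h3.comp_tendsto hgt
    apply germ_eq_of_rep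
    calc Quotient.out γ₁ = Quotient.out γ₁ ∘ id := rfl
      _ =ᶠ[𝓝 (0 : (Fin n → ℂ))] Quotient.out γ₁ ∘ (f ∘ g) := (hfg.fun_comp (Quotient.out γ₁)).symm
      _ = (Quotient.out γ₁ ∘ f) ∘ g := rfl
      _ =ᶠ[𝓝 (0 : (Fin n → ℂ))] (Quotient.out γ₂ ∘ f) ∘ g := h4
      _ = Quotient.out γ₂ ∘ (f ∘ g) := rfl
      _ =ᶠ[𝓝 (0 : (Fin n → ℂ))] Quotient.out γ₂ ∘ id := hfg.fun_comp (Quotient.out γ₂)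
      _ = Quotient.out γ₂ := rfl
  -- hence Φ is a bijection of Gf onto itself
  have himage : Gf.image Φ = Gf := by
    apply Finset.eq_of_subset_of_card_le
    · intro x hx
      obtain ⟨γ, hγ, rfl⟩ := Finset.mem_image.1 hx
      exact hΦmem γ hγ
    · rw [Finset.card_image_of_injOn hΦinj]
  -- the key unit identity
  have hΦunit : ∀ γ ∈ Gf, u (Φ γ) = u γ * uf := by
    intro γ hγ
    have hd : fderiv ℂ (Quotient.out (Φ γ)) 0 = ((u γ * uf : ((Fin n → ℂ) →L[ℂ] (Fin n → ℂ))ˣ) : (Fin n → ℂ) →L[ℂ] (Fin n → ℂ)) := by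
      rw [(hΦrep γ).fderiv_eq]
      have hdiff_f : DifferentiableAt ℂ f 0 := (hanal f hf).differentiableAt
      have hdiff_γ : DifferentiableAt ℂ (Quotient.out γ) (f 0) := by
        rw [hfix f hf]; exact (hγanal γ hγ).differentiableAt
      rw [fderiv_comp 0 hdiff_γ hdiff_f, hfix f hf, Units.val_mul, hu_val γ hγ, hufval,
        ContinuousLinearMap.mul_def]
    apply Units.ext
    rw [hu_val (Φ γ) (hΦmem γ hγ), hd]
  -- pointwise identity, eventually
  have key : ∀ γ ∈ Gf, ∀ᶠ x in 𝓝 (0 : (Fin n → ℂ)),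
      ((u γ)⁻¹).val (Quotient.out γ (f x))
        = (fderiv ℂ f 0) (((u (Φ γ))⁻¹).val (Quotient.out (Φ γ) x)) := by
    intro γ hγ
    filter_upwards [hΦrep γ] with x hx
    rw [hx]
    show ((u γ)⁻¹).val (Quotient.out γ (f x))
      = (fderiv ℂ f 0) (((u (Φ γ))⁻¹).val (Quotient.out γ (f x)))
    rw [hΦunit γ hγ, ← hufval]
    have : (uf : (Fin n → ℂ) →L[ℂ] (Fin n → ℂ)) (((u γ * uf)⁻¹).val (Quotient.out γ (f x)))
        = ((uf * (u γ * uf)⁻¹).val) (Quotient.out γ (f x)) := by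
      rw [Units.val_mul, ContinuousLinearMap.mul_def, ContinuousLinearMap.comp_apply]
    rw [this, mul_inv_rev, mul_inv_cancel_left]
  -- conclude
  have hall := (Gf.eventually_all (l := 𝓝 (0 : (Fin n → ℂ)))).2 key
  filter_upwards [hall] with x hx
  show h0 (f x) = (ContinuousLinearEquiv.unitsEquiv ℂ (Fin n → ℂ) uf) (h0 x)
  rw [ContinuousLinearEquiv.unitsEquiv_apply, hufval]
  calc h0 (f x) = c • ∑ γ ∈ Gf, ((u γ)⁻¹).val (Quotient.out γ (f x)) := rfl
    _ = c • ∑ γ ∈ Gf, (fderiv ℂ f 0) (((u (Φ γ))⁻¹).val (Quotient.out (Φ γ) x)) := by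
        rw [Finset.sum_congr rfl hx]
    _ = (fderiv ℂ f 0) (c • ∑ γ ∈ Gf, ((u (Φ γ))⁻¹).val (Quotient.out (Φ γ) x)) := by
        rw [map_smul, map_sum]
    _ = (fderiv ℂ f 0) (c • ∑ γ ∈ Gf, ((u γ)⁻¹).val (Quotient.out γ x)) := by
        congr 1
        conv_rhs => rw [← himage, Finset.sum_image (fun a ha b hb => hΦinj ha hb)]
    _ = (fderiv ℂ f 0) (h0 x) := rfl
end

section
/- Let G be a subgroup of the group of germs of biholomorphisms of (ℂ, 0). If every element of G has finite order dividing e, then G is abelian and isomorphic to a finite cyclic group of order dividing e. -/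
open Filter Function

private lemma germ_tendsto0 {g : ℂ → ℂ} (hg : AnalyticAt ℂ g 0) (h0 : g 0 = 0) :
    Filter.Tendsto g (nhds 0) (nhds 0) := by have := hg.continuousAt.tendsto; rwa [h0] at this

private lemma deriv_comp0 {f g : ℂ → ℂ} (hf : AnalyticAt ℂ f 0) (hg : AnalyticAt ℂ g 0)
    (h0 : g 0 = 0) : deriv (f ∘ g) 0 = deriv f 0 * deriv g 0 := by
  rw [deriv_comp 0 (by rw [h0]; exact hf.differentiableAt) hg.differentiableAt, h0]

private lemma iterate_props {f : ℂ → ℂ} (hf : AnalyticAt ℂ f 0) (h0 : f 0 = 0) (k : ℕ) :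
    AnalyticAt ℂ f^[k] 0 ∧ f^[k] 0 = 0 ∧ deriv f^[k] 0 = deriv f 0 ^ k := by
  induction k with
  | zero => simp [Function.iterate_zero, analyticAt_id]
  | succ k ih =>
    rw [Function.iterate_succ']
    obtain ⟨h1, h2, h3⟩ := ih
    refine ⟨(by rw [h2]; exact hf : AnalyticAt ℂ f (f^[k] 0)).comp h1, by simp [h2, h0], ?_⟩
    rw [deriv_comp0 hf h1 h2, h3, pow_succ]
    ring

private lemma key_rigid {f : ℂ → ℂ} (hf : AnalyticAt ℂ f 0) (h0 : f 0 = 0) (hd : deriv f 0 = 1)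
    {e : ℕ} (he : 0 < e) (hit : f^[e] =ᶠ[nhds 0] id) : f =ᶠ[nhds 0] id := by
  by_contra hne
  have hF : AnalyticAt ℂ (fun z => f z - z) 0 := hf.sub (analyticAt_id)
  have hFne : ¬ ∀ᶠ z in nhds 0, f z - z = 0 := by
    intro h
    exact hne (h.mono fun z hz => by simpa [sub_eq_zero] using hz)
  have hord : analyticOrderAt (fun z => f z - z) 0 ≠ ⊤ := fun h => hFne (analyticOrderAt_eq_top.mp h)
  lift analyticOrderAt (fun z => f z - z) 0 to ℕ using hord with n hn
  obtain ⟨g, hg, hg0, hfg⟩ := (hF.analyticOrderAt_eq_natCast (n := n)).mp hn.symm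
  simp only [sub_zero, smul_eq_mul] at hfg
  -- hfg : ∀ᶠ z, f z - z = z ^ n * g z
  set h : ℂ → ℂ := dslope f 0 with hh_def
  have hh : AnalyticAt ℂ h 0 := by
    obtain ⟨p, hp⟩ := hf
    exact hp.has_fpower_series_dslope_fslope.analyticAt
  have hh0 : h 0 = 1 := by rw [hh_def, dslope_same, hd]
  have hfac : ∀ z, f z = z * h z := by
    intro z
    have := sub_smul_dslope f 0 z
    rw [h0, sub_zero, sub_zero, smul_eq_mul] at this
    exact this.symm
  have hkey : ∀ j : ℕ, ∃ G : ℂ → ℂ, AnalyticAt ℂ G 0 ∧ G 0 = j * g 0 ∧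
      ∀ᶠ z in nhds 0, f^[j] z - z = z ^ n * G z := by
    intro j
    induction j with
    | zero => exact ⟨fun _ => 0, analyticAt_const, by simp, by simp⟩
    | succ j ih =>
      obtain ⟨G, hG, hG0, hGe⟩ := ih
      refine ⟨fun z => h z ^ n * G (f z) + g z, ?_, ?_, ?_⟩
      · exact ((hh.pow n).mul ((by rw [h0]; exact hG : AnalyticAt ℂ G (f 0)).comp hf)).add hg
      · simp only [h0, hh0, one_pow, hG0, one_mul]
        push_cast; ring
      · have htend : Tendsto f (nhds 0) (nhds 0) := germ_tendsto0 hf h0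
        filter_upwards [htend.eventually hGe, hfg] with z h1 h2
        rw [Function.iterate_succ_apply]
        have : f^[j] (f z) - f z = (f z) ^ n * G (f z) := h1
        have hz : f z = z * h z := hfac z
        calc f^[j] (f z) - z = (f^[j] (f z) - f z) + (f z - z) := by ring
          _ = (z * h z) ^ n * G (f z) + z ^ n * g z := by rw [this, h2, hz]
          _ = z ^ n * (h z ^ n * G (f z) + g z) := by ring
  obtain ⟨G, hG, hG0, hGe⟩ := hkey e
  have hGz : ∀ᶠ z in nhdsWithin (0:ℂ) {0}ᶜ, G z = 0 := by
    rw [eventually_nhdsWithin_iff]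
    filter_upwards [hGe, hit] with z h1 h2 hz
    have hzz : z ^ n * G z = 0 := by
      rw [← h1, h2]; simp
    exact (mul_eq_zero.mp hzz).resolve_left (pow_ne_zero n hz)
  have hlim1 : Tendsto G (nhdsWithin (0:ℂ) {0}ᶜ) (nhds (G 0)) :=
    hG.continuousAt.continuousWithinAt.tendsto
  have hlim2 : Tendsto G (nhdsWithin (0:ℂ) {0}ᶜ) (nhds 0) :=
    Tendsto.congr' (EventuallyEq.symm hGz) tendsto_const_nhds
  have hG00 : G 0 = 0 := tendsto_nhds_unique hlim1 hlim2
  rw [hG0] at hG00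
  exact hg0 ((mul_eq_zero.mp hG00).resolve_left (Nat.cast_ne_zero.mpr he.ne'))

/-- A subgroup of the group of germs of biholomorphisms of `(ℂ, 0)` in which
every element has finite order dividing `e` is abelian and isomorphic to a
finite cyclic group of order dividing `e`. The subgroup is modelled by a set
`S` of representative functions; the conclusion states commutativity up to
germs, the existence of a generator up to germs, and that the number of germs
divides `e`. -/
theorem exponent_e_subgroup_of_one_dim_germs_is_cyclic
    (S : Set (ℂ → ℂ))
    (hanal : ∀ f ∈ S, AnalyticAt ℂ f 0) (hfix : ∀ f ∈ S, f 0 = 0)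
    (hid : ∃ f ∈ S, f =ᶠ[nhds 0] id)
    (hcomp : ∀ f ∈ S, ∀ g ∈ S, ∃ h ∈ S, h =ᶠ[nhds 0] f ∘ g)
    (hinv : ∀ f ∈ S, ∃ g ∈ S, g ∘ f =ᶠ[nhds 0] id)
    (e : ℕ) (he : 0 < e)
    (hexp : ∀ f ∈ S, f^[e] =ᶠ[nhds 0] id) :
    (∀ f ∈ S, ∀ g ∈ S, f ∘ g =ᶠ[nhds 0] g ∘ f) ∧
    (∃ g₀ ∈ S, ∀ g ∈ S, ∃ k : ℕ, g =ᶠ[nhds 0] g₀^[k]) ∧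
    Set.Finite ((fun f => Filter.Germ.ofFun f : (ℂ → ℂ) → Filter.Germ (nhds (0 : ℂ)) ℂ) '' S) ∧
    Nat.card ((fun f => Filter.Germ.ofFun f : (ℂ → ℂ) → Filter.Germ (nhds (0 : ℂ)) ℂ) '' S) ∣ e := by
  obtain ⟨i, hiS, hi⟩ := hid
  have hide : deriv i 0 = 1 := by rw [hi.deriv_eq, deriv_id]
  have hpow_one : ∀ f ∈ S, deriv f 0 ^ e = 1 := by
    intro f hf
    have h1 := (hexp f hf).deriv_eq
    rw [deriv_id] at h1
    rw [← (iterate_props (hanal f hf) (hfix f hf) e).2.2, h1]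
  -- injectivity of the derivative on S up to germ equality
  have hinj : ∀ f ∈ S, ∀ g ∈ S, deriv f 0 = deriv g 0 → f =ᶠ[nhds 0] g := by
    intro f hfS g hgS hd
    obtain ⟨g', hg'S, hg'⟩ := hinv g hgS
    obtain ⟨h, hhS, hh⟩ := hcomp f hfS g' hg'S
    have hdh : deriv h 0 = deriv f 0 * deriv g' 0 :=
      hh.deriv_eq.trans (deriv_comp0 (hanal f hfS) (hanal g' hg'S) (hfix g' hg'S))
    have hinv_d : deriv g' 0 * deriv g 0 = 1 := by
      have h2 := hg'.deriv_eq
      rwa [deriv_comp0 (hanal g' hg'S) (hanal g hgS) (hfix g hgS), deriv_id] at h2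
    have hdh1 : deriv h 0 = 1 := by rw [hdh, hd, mul_comm]; exact hinv_d
    have hkey := key_rigid (hanal h hhS) (hfix h hhS) hdh1 he (hexp h hhS)
    have h1 : f ∘ g' =ᶠ[nhds 0] id := hh.symm.trans hkey
    have h2 : (f ∘ g') ∘ g =ᶠ[nhds 0] id ∘ g :=
      h1.comp_tendsto (germ_tendsto0 (hanal g hgS) (hfix g hgS))
    have h3 : f =ᶠ[nhds 0] (f ∘ g') ∘ g := by
      filter_upwards [hg'] with z hz
      simp only [Function.comp_apply]
      have : g' (g z) = z := hz
      rw [this]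
    exact h3.trans (h2.trans (by simp))
  -- derivative of germ composition
  have hmulS : ∀ f ∈ S, ∀ g ∈ S, ∃ h ∈ S, h =ᶠ[nhds 0] f ∘ g ∧
      deriv h 0 = deriv f 0 * deriv g 0 := by
    intro f hfS g hgS
    obtain ⟨h, hhS, hh⟩ := hcomp f hfS g hgS
    exact ⟨h, hhS, hh,
      hh.deriv_eq.trans (deriv_comp0 (hanal f hfS) (hanal g hgS) (hfix g hgS))⟩
  -- commutativity
  have hcommut : ∀ f ∈ S, ∀ g ∈ S, f ∘ g =ᶠ[nhds 0] g ∘ f := by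
    intro f hfS g hgS
    obtain ⟨h1, h1S, hh1, hd1⟩ := hmulS f hfS g hgS
    obtain ⟨h2, h2S, hh2, hd2⟩ := hmulS g hgS f hfS
    have : deriv h1 0 = deriv h2 0 := by rw [hd1, hd2, mul_comm]
    exact hh1.symm.trans ((hinj h1 h1S h2 h2S this).trans hh2)
  -- the set of derivatives
  set V : Set ℂ := (fun f => deriv f 0) '' S with hV
  have hone_mem : (1:ℂ) ∈ V := ⟨i, hiS, hide⟩
  have hmul_mem : ∀ a ∈ V, ∀ b ∈ V, a * b ∈ V := by
    rintro a ⟨f, hfS, rfl⟩ b ⟨g, hgS, rfl⟩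
    obtain ⟨h, hhS, _, hd⟩ := hmulS f hfS g hgS
    exact ⟨h, hhS, hd⟩
  have hne0 : ∀ a ∈ V, a ≠ 0 := by
    rintro a ⟨f, hfS, rfl⟩ h0
    simp only at h0
    have := hpow_one f hfS
    rw [h0, zero_pow he.ne'] at this
    exact zero_ne_one this
  have hinv_mem : ∀ a ∈ V, ∃ b ∈ V, b * a = 1 := by
    rintro a ⟨g, hgS, rfl⟩
    obtain ⟨g', hg'S, hg'⟩ := hinv g hgS
    refine ⟨deriv g' 0, ⟨g', hg'S, rfl⟩, ?_⟩
    have h2 := hg'.deriv_eq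
    rwa [deriv_comp0 (hanal g' hg'S) (hanal g hgS) (hfix g hgS), deriv_id] at h2
  have hVpow : ∀ a ∈ V, a ^ e = 1 := by rintro a ⟨f, hfS, rfl⟩; exact hpow_one f hfS
  have hVfin : V.Finite := by
    apply Set.Finite.subset (Polynomial.nthRootsFinset e (1 : ℂ)).finite_toSet
    intro a ha
    rw [Finset.mem_coe, Polynomial.mem_nthRootsFinset he]
    exact hVpow a ha
  -- the subgroup of units
  let H : Subgroup ℂˣ :=
    { carrier := {u : ℂˣ | (u : ℂ) ∈ V}
      mul_mem' := fun ha hb => hmul_mem _ ha _ hb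
      one_mem' := hone_mem
      inv_mem' := by
        intro u hu
        obtain ⟨b, hbV, hba⟩ := hinv_mem _ hu
        have hb : b = (u : ℂ)⁻¹ := eq_inv_of_mul_eq_one_left hba
        show ((u⁻¹ : ℂˣ) : ℂ) ∈ V
        rw [Units.val_inv_eq_inv_val, ← hb]
        exact hbV }
  have hmemH : ∀ u : ℂˣ, u ∈ H ↔ (u : ℂ) ∈ V := fun u => Iff.rfl
  let toV : H → V := fun u => ⟨((u : ℂˣ) : ℂ), u.2⟩
  have hbij : Function.Bijective toV := by
    constructor
    · intro u v huv
      exact Subtype.ext (Units.ext (congrArg Subtype.val huv))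
    · rintro ⟨a, ha⟩
      exact ⟨⟨Units.mk0 a (hne0 a ha), ha⟩, rfl⟩
  have hVH : Nat.card H = Nat.card V := Nat.card_eq_of_bijective toV hbij
  have : Finite V := hVfin.to_subtype
  have : Finite H := Finite.of_equiv V (Equiv.ofBijective toV hbij).symm
  obtain ⟨ζ, hζ⟩ := IsCyclic.exists_generator (α := H)
  have hcardH : Nat.card H = orderOf ζ := (orderOf_eq_card_of_forall_mem_zpowers hζ).symm
  have hζV : ((ζ : ℂˣ) : ℂ) ∈ V := ζ.2
  have hζe : ζ ^ e = 1 := by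
    have h1 : ((ζ : ℂˣ) : ℂ) ^ e = 1 := hVpow _ hζV
    apply Subtype.ext
    apply Units.ext
    push_cast
    exact h1
  have hcard_dvd : Nat.card V ∣ e := by
    rw [← hVH, hcardH]
    exact orderOf_dvd_of_pow_eq_one hζe
  -- generator in S
  obtain ⟨g₀, hg₀S, hg₀d⟩ := hζV
  simp only at hg₀d
  have hiter : ∀ k : ℕ, ∃ h ∈ S, h =ᶠ[nhds 0] g₀^[k] := by
    intro k
    induction k with
    | zero => exact ⟨i, hiS, by simpa using hi⟩
    | succ k ih =>
      obtain ⟨h, hhS, hh⟩ := ih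
      obtain ⟨h', hh'S, hh'⟩ := hcomp g₀ hg₀S h hhS
      refine ⟨h', hh'S, ?_⟩
      rw [Function.iterate_succ']
      exact hh'.trans (hh.fun_comp g₀)
  have hgen : ∀ g ∈ S, ∃ k : ℕ, g =ᶠ[nhds 0] g₀^[k] := by
    intro g hgS
    have hgV : deriv g 0 ∈ V := ⟨g, hgS, rfl⟩
    set u : H := ⟨Units.mk0 (deriv g 0) (hne0 _ hgV), hgV⟩ with hu
    obtain ⟨k, hk⟩ := (Submonoid.mem_powers_iff u ζ).mp
      (mem_powers_iff_mem_zpowers.mpr (hζ u))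
    have hkd : deriv g₀ 0 ^ k = deriv g 0 := by
      have := congrArg (fun y : H => ((y : ℂˣ) : ℂ)) hk
      push_cast at this
      rwa [hg₀d]
    obtain ⟨h, hhS, hh⟩ := hiter k
    have hdh : deriv h 0 = deriv g₀^[k] 0 := hh.deriv_eq
    rw [(iterate_props (hanal g₀ hg₀S) (hfix g₀ hg₀S) k).2.2, hkd] at hdh
    exact ⟨k, (hinj g hgS h hhS hdh.symm).trans hh⟩
  -- the germ image
  set T : Set (Filter.Germ (nhds (0:ℂ)) ℂ) :=
    (fun f => Filter.Germ.ofFun f : (ℂ → ℂ) → Filter.Germ (nhds (0 : ℂ)) ℂ) '' S with hT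
  let m : Filter.Germ (nhds (0:ℂ)) ℂ → ℂ := fun t => deriv (Quotient.out t) 0
  have hout : ∀ f : ℂ → ℂ, (Quotient.out (Filter.Germ.ofFun f : Filter.Germ (nhds (0:ℂ)) ℂ))
      =ᶠ[nhds 0] f := by
    intro f
    have h1 : (Filter.Germ.ofFun (Quotient.out (Filter.Germ.ofFun f : Filter.Germ (nhds (0:ℂ)) ℂ))
        : Filter.Germ (nhds (0:ℂ)) ℂ) = Filter.Germ.ofFun f := Quotient.out_eq _
    exact Filter.Germ.coe_eq.mp h1
  have hmofun : ∀ f : ℂ → ℂ, m (Filter.Germ.ofFun f) = deriv f 0 :=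
    fun f => (hout f).deriv_eq
  have hmT : m '' T = V := by
    rw [hT, Set.image_image]
    exact Set.image_congr fun f _ => hmofun f
  have hinjT : Set.InjOn m T := by
    rintro t1 ⟨f, hfS, rfl⟩ t2 ⟨g, hgS, rfl⟩ hm
    rw [hmofun, hmofun] at hm
    exact Filter.Germ.coe_eq.mpr (hinj f hfS g hgS hm)
  have hTfin : T.Finite := Set.Finite.of_finite_image (hmT ▸ hVfin) hinjT
  have hTcard : Nat.card T = Nat.card V := by
    rw [Nat.card_coe_set_eq, Nat.card_coe_set_eq, ← hmT,
      Set.ncard_image_of_injOn hinjT]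
  exact ⟨hcommut, ⟨g₀, hg₀S, hgen⟩, hTfin, hTcard ▸ hcard_dvd⟩
end
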